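/- Let A be a Hermitian operator on ℂ^d, let v ∈ ℝ with |v| ≤ ‖A‖_∞, let η, δ ≥ 0, and let Π be the spectral projector of A onto the direct sum of its eigenspaces with eigenvalue in [v − η Σ(A), v + η Σ(A)]. If a density matrix ω on ℂ^d satisfies Tr(ω Π) ≥ 1 − δ, then |Tr(ω A) − v| ≤ η Σ(A) + 2 δ ‖A‖_∞. -/

import Mathlib

open Matrix BigOperators
open scoped ComplexOrder

/-- Functional calculus for a Hermitian matrix: apply `f` to the eigenvalues.
(Returns `0` if the matrix is not Hermitian.) -/
noncomputable def matFun {n : Type*} [Fintype n] [DecidableEq n]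
    (f : ℝ → ℝ) (A : Matrix n n ℂ) : Matrix n n ℂ :=
  if hA : A.IsHermitian then
    (hA.eigenvectorUnitary : Matrix n n ℂ) *
      Matrix.diagonal (fun i => (f (hA.eigenvalues i) : ℂ)) *
      (star hA.eigenvectorUnitary : Matrix n n ℂ)
  else 0

/-- Spectral projector of a Hermitian matrix onto the direct sum of the
eigenspaces with eigenvalue in the closed interval `[a, b]`. -/
noncomputable def specProj {n : Type*} [Fintype n] [DecidableEq n]
    (A : Matrix n n ℂ) (a b : ℝ) : Matrix n n ℂ :=
  matFun (Set.indicator (Set.Icc a b) fun _ => (1 : ℝ)) A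

/-- Largest eigenvalue of a Hermitian matrix. -/
noncomputable def eigMax {n : Type*} [Fintype n] [DecidableEq n]
    (A : Matrix n n ℂ) : ℝ :=
  if hA : A.IsHermitian then ⨆ i, hA.eigenvalues i else 0

/-- Smallest eigenvalue of a Hermitian matrix. -/
noncomputable def eigMin {n : Type*} [Fintype n] [DecidableEq n]
    (A : Matrix n n ℂ) : ℝ :=
  if hA : A.IsHermitian then ⨅ i, hA.eigenvalues i else 0

/-- Spectral diameter `Σ(A) = λ_max(A) - λ_min(A)` of a Hermitian matrix. -/
noncomputable def specDiam {n : Type*} [Fintype n] [DecidableEq n]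
    (A : Matrix n n ℂ) : ℝ :=
  eigMax A - eigMin A

/-- Operator norm `‖A‖_∞` of a Hermitian matrix: the largest absolute value
of an eigenvalue. -/
noncomputable def opNorm {n : Type*} [Fintype n] [DecidableEq n]
    (A : Matrix n n ℂ) : ℝ :=
  if hA : A.IsHermitian then ⨆ i, |hA.eigenvalues i| else 0

/-- The single-site operator `I^{⊗ℓ} ⊗ Q ⊗ I^{⊗(N-1-ℓ)}` on `(ℂ^d)^{⊗N}`. -/
noncomputable def siteOp {d : ℕ} (Q : Matrix (Fin d) (Fin d) ℂ) (N : ℕ) (ℓ : Fin N) :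
    Matrix (Fin N → Fin d) (Fin N → Fin d) ℂ :=
  Matrix.of fun x y =>
    (∏ k ∈ Finset.univ.erase ℓ, if x k = y k then (1 : ℂ) else 0) * Q (x ℓ) (y ℓ)

/-- The average operator `Q̄ := (1/N) Σ_ℓ I^{⊗ℓ} ⊗ Q ⊗ I^{⊗(N-1-ℓ)}` on `(ℂ^d)^{⊗N}`. -/
noncomputable def avgOp {d : ℕ} (Q : Matrix (Fin d) (Fin d) ℂ) (N : ℕ) :
    Matrix (Fin N → Fin d) (Fin N → Fin d) ℂ :=
  (N : ℂ)⁻¹ • ∑ ℓ : Fin N, siteOp Q N ℓ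

/-- The `N`-fold tensor power `ρ^{⊗N}` on `(ℂ^d)^{⊗N}`. -/
noncomputable def tensorPow {d : ℕ} (ρ : Matrix (Fin d) (Fin d) ℂ) (N : ℕ) :
    Matrix (Fin N → Fin d) (Fin N → Fin d) ℂ :=
  Matrix.of fun x y => ∏ ℓ, ρ (x ℓ) (y ℓ)

/-- The reduced state on the `ℓ`-th tensor factor: partial trace over all
tensor factors except the `ℓ`-th. -/
noncomputable def reduceAt {d N : ℕ}
    (Ω : Matrix (Fin N → Fin d) (Fin N → Fin d) ℂ) (ℓ : Fin N) :
    Matrix (Fin d) (Fin d) ℂ :=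
  Matrix.of fun a b =>
    ∑ x ∈ Finset.univ.filter (fun x : Fin N → Fin d => x ℓ = a),
      Ω x (Function.update x ℓ b)

/-- Quantum relative entropy `D(ρ‖σ) = Tr(ρ (log ρ - log σ))`, with the
convention `log 0 = 0` (so `0 log 0 = 0` on the kernel of `ρ`). -/
noncomputable def relEnt {n : Type*} [Fintype n] [DecidableEq n]
    (ρ σ : Matrix n n ℂ) : ℝ :=
  (Matrix.trace (ρ * (matFun Real.log ρ - matFun Real.log σ))).re

/-- Trace norm `‖A‖₁ = Tr √(AᴴA)`. -/
noncomputable def traceNorm {n : Type*} [Fintype n] [DecidableEq n]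
    (A : Matrix n n ℂ) : ℝ :=
  (Matrix.trace (((Matrix.posSemidef_conjTranspose_mul_self A).1.eigenvectorUnitary : Matrix n n ℂ) *
    Matrix.diagonal (fun i => ((√((Matrix.posSemidef_conjTranspose_mul_self A).1.eigenvalues i) : ℝ) : ℂ)) *
    (star (Matrix.posSemidef_conjTranspose_mul_self A).1.eigenvectorUnitary : Matrix n n ℂ))).re

/-- Matrix exponential, defined by the power series. -/
noncomputable def matExp {n : Type*} [Fintype n] [DecidableEq n]
    (A : Matrix n n ℂ) : Matrix n n ℂ :=
  ∑' k : ℕ, ((k.factorial : ℂ)⁻¹) • A ^ k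

/-!
Measuring `A` in the state `ω` yields the eigenvalue `λᵢ` with probability
`pᵢ = (U* ω U)ᵢᵢ`, where `U` diagonalises `A`; thus `Tr(ωA) = ∑ pᵢ λᵢ` and `Tr(ωΠ)` is the mass
the `pᵢ` give to the window. Eigenvalues inside the window lie within `η Σ(A)` of `v`, those
outside within `|λᵢ| + |v| ≤ 2 ‖A‖_∞`, and the outside carries mass at most `δ`.
-/

theorem abs_sum_mul_sub_le_of_concentrated {ι : Type*} [Fintype ι] {p x : ι → ℝ}
    (hp : ∀ i, 0 ≤ p i) (hp1 : ∑ i, p i = 1) {v ε δ B : ℝ} (hε : 0 ≤ ε)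
    (hB : ∀ i, |x i - v| ≤ B) (hpeak : 1 - δ ≤ ∑ i with x i ∈ Set.Icc (v - ε) (v + ε), p i) :
    |∑ i, p i * x i - v| ≤ ε + δ * B := by
  classical
  set S := Finset.univ.filter fun i => x i ∈ Set.Icc (v - ε) (v + ε)
  have hB0 : 0 ≤ B := by
    obtain ⟨i⟩ := Finset.univ_nonempty_iff.mp
      (Finset.nonempty_of_sum_ne_zero (hp1.trans_ne one_ne_zero))
    exact (abs_nonneg _).trans (hB i)
  have hmass : ∑ i ∈ S, p i + ∑ i ∈ Sᶜ, p i = 1 := by rw [Finset.sum_add_sum_compl, hp1]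
  have hnear : ∑ i ∈ S, p i * |x i - v| ≤ (∑ i ∈ S, p i) * ε := by
    rw [Finset.sum_mul]
    refine Finset.sum_le_sum fun i hi => mul_le_mul_of_nonneg_left ?_ (hp i)
    obtain ⟨hlo, hhi⟩ := (Finset.mem_filter.mp hi).2
    exact abs_sub_le_iff.mpr ⟨by linarith, by linarith⟩
  have hfar : ∑ i ∈ Sᶜ, p i * |x i - v| ≤ (∑ i ∈ Sᶜ, p i) * B := by
    rw [Finset.sum_mul]
    exact Finset.sum_le_sum fun i _ => mul_le_mul_of_nonneg_left (hB i) (hp i)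
  calc |∑ i, p i * x i - v| = |∑ i, p i * (x i - v)| := by
        simp only [mul_sub, Finset.sum_sub_distrib, ← Finset.sum_mul, hp1, one_mul]
    _ ≤ ∑ i, p i * |x i - v| := by
        refine (Finset.abs_sum_le_sum_abs _ _).trans_eq (Finset.sum_congr rfl fun i _ => ?_)
        rw [abs_mul, abs_of_nonneg (hp i)]
    _ = ∑ i ∈ S, p i * |x i - v| + ∑ i ∈ Sᶜ, p i * |x i - v| :=
        (Finset.sum_add_sum_compl _ _).symm
    _ ≤ (∑ i ∈ S, p i) * ε + (∑ i ∈ Sᶜ, p i) * B := add_le_add hnear hfar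
    _ ≤ ε + δ * B := by
        have hS : ∑ i ∈ S, p i ≤ 1 := by linarith [Finset.sum_nonneg fun i (_ : i ∈ Sᶜ) => hp i]
        nlinarith

section SpectralWeights

variable {n : Type*} [Fintype n] [DecidableEq n]

theorem trace_mul_conj_diagonal {R : Type*} [CommRing R] [StarRing R]
    (ω U : Matrix n n R) (c : n → R) :
    (ω * (U * diagonal c * star U)).trace = ∑ i, (star U * ω * U) i i * c i := by
  rw [← mul_assoc, ← mul_assoc, trace_mul_comm, ← mul_assoc, ← mul_assoc]
  simp only [trace, diag, mul_diagonal]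

noncomputable def spectralWeight {A : Matrix n n ℂ} (hA : A.IsHermitian) (ω : Matrix n n ℂ)
    (i : n) : ℝ :=
  ((star (hA.eigenvectorUnitary : Matrix n n ℂ) * ω * hA.eigenvectorUnitary) i i).re

variable {A ω : Matrix n n ℂ} (hA : A.IsHermitian)

theorem spectralWeight_nonneg (hω : ω.PosSemidef) (i : n) : 0 ≤ spectralWeight hA ω i := by
  have hconj := hω.conjTranspose_mul_mul_same (hA.eigenvectorUnitary : Matrix n n ℂ)
  rw [← star_eq_conjTranspose] at hconj
  exact (Complex.nonneg_iff.mp hconj.diag_nonneg).1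

theorem sum_spectralWeight : ∑ i, spectralWeight hA ω i = ω.trace.re := by
  have h := trace_mul_conj_diagonal ω (hA.eigenvectorUnitary : Matrix n n ℂ) fun _ => 1
  rw [diagonal_one, mul_one, Unitary.mul_star_self_of_mem hA.eigenvectorUnitary.2, mul_one] at h
  simp [spectralWeight, h, Complex.re_sum]

theorem re_trace_mul_conj_diagonal_ofReal (r : n → ℝ) :
    (ω * ((hA.eigenvectorUnitary : Matrix n n ℂ) * diagonal (fun i => (r i : ℂ)) *
      star (hA.eigenvectorUnitary : Matrix n n ℂ))).trace.re =
      ∑ i, spectralWeight hA ω i * r i := by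
  simp [trace_mul_conj_diagonal, spectralWeight, Complex.re_sum]

theorem re_trace_mul_eq_sum_spectralWeight :
    (ω * A).trace.re = ∑ i, spectralWeight hA ω i * hA.eigenvalues i := by
  conv_lhs => rw [hA.spectral_theorem]
  exact re_trace_mul_conj_diagonal_ofReal hA hA.eigenvalues

theorem re_trace_mul_specProj (a b : ℝ) :
    (ω * specProj A a b).trace.re =
      ∑ i with hA.eigenvalues i ∈ Set.Icc a b, spectralWeight hA ω i := by
  rw [specProj, matFun, dif_pos hA, re_trace_mul_conj_diagonal_ofReal, Finset.sum_filter]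
  refine Finset.sum_congr rfl fun i _ => ?_
  by_cases h : hA.eigenvalues i ∈ Set.Icc a b <;> simp [h]

theorem abs_eigenvalues_le_opNorm (i : n) : |hA.eigenvalues i| ≤ opNorm A := by
  rw [opNorm, dif_pos hA]
  exact le_ciSup (Set.finite_range fun j => |hA.eigenvalues j|).bddAbove i

omit hA in
theorem specDiam_nonneg (A : Matrix n n ℂ) : 0 ≤ specDiam A := by
  rw [specDiam, eigMax, eigMin, sub_nonneg]
  split_ifs with hA
  · cases isEmpty_or_nonempty n
    · simp
    · exact ciInf_le_ciSup (Set.finite_range hA.eigenvalues).bddBelow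
        (Set.finite_range _).bddAbove
  · rfl

end SpectralWeights

theorem expectation_close_of_peaked_general
    {d : ℕ} (A : Matrix (Fin d) (Fin d) ℂ) (hA : A.IsHermitian)
    (v : ℝ) (hvA : |v| ≤ opNorm A)
    (η δ : ℝ) (hη : 0 ≤ η)
    (ω : Matrix (Fin d) (Fin d) ℂ) (hω : ω.PosSemidef) (hω1 : ω.trace = 1)
    (hpeak : 1 - δ ≤ (Matrix.trace (ω *
      specProj A (v - η * specDiam A) (v + η * specDiam A))).re) :
    |(Matrix.trace (ω * A)).re - v| ≤ η * specDiam A + 2 * δ * opNorm A := by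
  have hdist : ∀ i, |hA.eigenvalues i - v| ≤ 2 * opNorm A := fun i => by
    linarith [abs_sub (hA.eigenvalues i) v, abs_eigenvalues_le_opNorm hA i]
  rw [re_trace_mul_specProj hA] at hpeak
  rw [re_trace_mul_eq_sum_spectralWeight hA]
  refine (abs_sum_mul_sub_le_of_concentrated (spectralWeight_nonneg hA hω)
    (by rw [sum_spectralWeight, hω1, Complex.one_re]) (mul_nonneg hη (specDiam_nonneg A))
    hdist hpeak).trans_eq (by ring)

/-- If a density matrix gives high weight to the spectral
window of `A` around `v`, then its expectation value of `A` is close to `v`. -/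
theorem expectation_close_of_peaked
    {d : ℕ} (A : Matrix (Fin d) (Fin d) ℂ) (hA : A.IsHermitian)
    (v : ℝ) (hvA : |v| ≤ opNorm A)
    (η δ : ℝ) (hη : 0 ≤ η) (hδ : 0 ≤ δ)
    (ω : Matrix (Fin d) (Fin d) ℂ) (hω : ω.PosSemidef) (hω1 : ω.trace = 1)
    (hpeak : 1 - δ ≤ (Matrix.trace (ω *
      specProj A (v - η * specDiam A) (v + η * specDiam A))).re) :
    |(Matrix.trace (ω * A)).re - v| ≤ η * specDiam A + 2 * δ * opNorm A :=
  expectation_close_of_peaked_general A hA v hvA η δ hη ω hω hω1 hpeak
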